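/- arXiv:1702.08366 — 5 statements merged into one kernel-verified Lean document; each statement's English description precedes it below -/
import Mathlib

section
/- Let A and B be positive semidefinite symmetric n×n real matrices. Then det(A+B)^(1/n) ≥ (det A)^(1/n) + (det B)^(1/n). -/
/-!
If `A` is invertible, write `A = S²` with `S = √A`; then `A + B = S (1 + M) S` with
`M = S⁻¹ B S⁻¹ ⪰ 0`, and dividing by `(det A)^(1/n)` reduces the claim to `A = 1`. In an
eigenbasis of `M` this is the superadditivity of the geometric mean,
`(∏ aᵢ)^(1/n) + (∏ bᵢ)^(1/n) ≤ (∏ (aᵢ + bᵢ))^(1/n)`, which is AM–GM applied to the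
ratios `aᵢ / (aᵢ + bᵢ)` and `bᵢ / (aᵢ + bᵢ)`, whose arithmetic means add up to `1`.
If neither `A` nor `B` is invertible, both determinants vanish.
-/

open Finset

namespace Real

variable {ι : Type*} [Fintype ι] [Nonempty ι]

theorem geom_mean_le_mean_div_mul_geom_mean {c s : ι → ℝ} (hc : ∀ i, 0 ≤ c i)
    (hs : ∀ i, 0 < s i) :
    (∏ i, c i) ^ ((1 : ℝ) / Fintype.card ι) ≤
      (∑ i, c i / s i) / Fintype.card ι * (∏ i, s i) ^ ((1 : ℝ) / Fintype.card ι) := by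
  have hcs : ∀ i, 0 ≤ c i / s i := fun i => div_nonneg (hc i) (hs i).le
  have hprod : ∏ i, c i = (∏ i, c i / s i) * ∏ i, s i := by
    rw [← prod_mul_distrib]
    exact prod_congr rfl fun i _ => (div_mul_cancel₀ _ (hs i).ne').symm
  rw [hprod, mul_rpow (prod_nonneg fun i _ => hcs i) (prod_nonneg fun i _ => (hs i).le),
    ← finsetProd_rpow _ _ fun i _ => hcs i]
  refine mul_le_mul_of_nonneg_right ?_ (rpow_nonneg (prod_nonneg fun i _ => (hs i).le) _)
  calc ∏ i, (c i / s i) ^ ((1 : ℝ) / Fintype.card ι)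
      ≤ ∑ i, (1 : ℝ) / Fintype.card ι * (c i / s i) :=
        geom_mean_le_arith_mean_weighted univ _ _ (fun i _ => by positivity)
          (by simp) fun i _ => hcs i
    _ = (∑ i, c i / s i) / Fintype.card ι := by rw [← mul_sum]; ring

theorem geom_mean_add_geom_mean_le {a b : ι → ℝ} (ha : ∀ i, 0 ≤ a i)
    (hb : ∀ i, 0 ≤ b i) :
    (∏ i, a i) ^ ((1 : ℝ) / Fintype.card ι) + (∏ i, b i) ^ ((1 : ℝ) / Fintype.card ι) ≤
      (∏ i, (a i + b i)) ^ ((1 : ℝ) / Fintype.card ι) := by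
  have hab : ∀ i, 0 ≤ a i + b i := fun i => add_nonneg (ha i) (hb i)
  by_cases hzero : ∃ i, a i + b i = 0
  · obtain ⟨i, hi⟩ := hzero
    have hk : (1 : ℝ) / Fintype.card ι ≠ 0 := by positivity
    rw [prod_eq_zero (mem_univ i) (by linarith [ha i, hb i] : a i = 0),
      prod_eq_zero (mem_univ i) (by linarith [ha i, hb i] : b i = 0), zero_rpow hk, zero_add]
    exact rpow_nonneg (prod_nonneg fun i _ => hab i) _
  push Not at hzero
  have hpos : ∀ i, 0 < a i + b i := fun i => (hab i).lt_of_ne' (hzero i)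
  have hsum : ∑ i, a i / (a i + b i) + ∑ i, b i / (a i + b i) = Fintype.card ι := by
    rw [← sum_add_distrib, ← card_univ, card_eq_sum_ones, Nat.cast_sum, Nat.cast_one]
    exact sum_congr rfl fun i _ => by rw [← add_div, div_self (hpos i).ne']
  set g := (∏ i, (a i + b i)) ^ ((1 : ℝ) / Fintype.card ι)
  calc _ ≤ (∑ i, a i / (a i + b i)) / Fintype.card ι * g
        + (∑ i, b i / (a i + b i)) / Fintype.card ι * g :=
        add_le_add (geom_mean_le_mean_div_mul_geom_mean ha hpos)
          (geom_mean_le_mean_div_mul_geom_mean hb hpos)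
    _ = _ := by rw [← add_mul, ← add_div, hsum, div_self (by positivity), one_mul]

end Real

namespace Matrix

variable {ι : Type*} [Fintype ι] [DecidableEq ι]

theorem IsHermitian.det_one_add {M : Matrix ι ι ℝ} (hM : M.IsHermitian) :
    (1 + M).det = ∏ i, (1 + hM.eigenvalues i) := by
  have h : 1 + M = cfc (fun x : ℝ => 1 + x) M := by
    rw [cfc_const_add _ _ M, cfc_id' ℝ M, Algebra.algebraMap_eq_smul_one, one_smul]
  rw [h, hM.cfc_eq, IsHermitian.cfc, Unitary.conjStarAlgAut_apply, det_mul_right_comm,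
    Unitary.mul_star_self_of_mem hM.eigenvectorUnitary.2, one_mul, det_diagonal]
  rfl

open scoped MatrixOrder in
theorem PosDef.exists_posSemidef_det_eq {A B : Matrix ι ι ℝ} (hA : A.PosDef)
    (hB : B.PosSemidef) :
    ∃ M : Matrix ι ι ℝ, M.PosSemidef ∧ B.det = A.det * M.det ∧
      (A + B).det = A.det * (1 + M).det := by
  set S := CFC.sqrt A
  have hSS : S * S = A := CFC.sqrt_mul_sqrt_self A hA.posSemidef.nonneg
  have hdet : IsUnit S.det := isUnit_iff_ne_zero.mpr fun h =>
    hA.det_pos.ne' (by rw [← hSS, det_mul, h, zero_mul])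
  set M := S⁻¹ * B * S⁻¹
  have hSMS : S * M * S = B := by
    simp only [M, Matrix.mul_assoc, nonsing_inv_mul _ hdet, mul_one]
    rw [← Matrix.mul_assoc, mul_nonsing_inv _ hdet, one_mul]
  refine ⟨M, ?_, ?_, ?_⟩
  · have hS_inv : (S⁻¹)ᴴ = S⁻¹ :=
      (nonneg_iff_posSemidef.mp (CFC.sqrt_nonneg A)).isHermitian.inv.eq
    simpa only [hS_inv] using hB.conjTranspose_mul_mul_same S⁻¹
  · rw [← hSS, ← hSMS]
    simp only [det_mul]
    ring
  · have hsum : A + B = S * (1 + M) * S := by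
      rw [Matrix.mul_add, mul_one, Matrix.add_mul, hSS, hSMS]
    rw [hsum, ← hSS]
    simp only [det_mul]
    ring

theorem PosSemidef.one_add_det_rpow_le [Nonempty ι] {M : Matrix ι ι ℝ} (hM : M.PosSemidef) :
    1 + M.det ^ ((1 : ℝ) / Fintype.card ι) ≤ (1 + M).det ^ ((1 : ℝ) / Fintype.card ι) := by
  simpa [hM.isHermitian.det_eq_prod_eigenvalues, hM.isHermitian.det_one_add] using
    Real.geom_mean_add_geom_mean_le (fun _ => zero_le_one) hM.eigenvalues_nonneg

theorem PosDef.det_rpow_add_le [Nonempty ι] {A B : Matrix ι ι ℝ} (hA : A.PosDef)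
    (hB : B.PosSemidef) :
    A.det ^ ((1 : ℝ) / Fintype.card ι) + B.det ^ ((1 : ℝ) / Fintype.card ι) ≤
      (A + B).det ^ ((1 : ℝ) / Fintype.card ι) := by
  obtain ⟨M, hM, hB_det, hAB_det⟩ := hA.exists_posSemidef_det_eq hB
  have hA_det := hA.det_pos.le
  calc _ = A.det ^ ((1 : ℝ) / Fintype.card ι) * (1 + M.det ^ ((1 : ℝ) / Fintype.card ι)) := by
        rw [hB_det, Real.mul_rpow hA_det hM.det_nonneg]
        ring
    _ ≤ A.det ^ ((1 : ℝ) / Fintype.card ι) * (1 + M).det ^ ((1 : ℝ) / Fintype.card ι) := by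
        gcongr
        exact hM.one_add_det_rpow_le
    _ = _ := by rw [hAB_det, Real.mul_rpow hA_det (PosSemidef.one.add hM).det_nonneg]

theorem PosSemidef.det_rpow_add_le [Nonempty ι] {A B : Matrix ι ι ℝ} (hA : A.PosSemidef)
    (hB : B.PosSemidef) :
    A.det ^ ((1 : ℝ) / Fintype.card ι) + B.det ^ ((1 : ℝ) / Fintype.card ι) ≤
      (A + B).det ^ ((1 : ℝ) / Fintype.card ι) := by
  rcases eq_or_ne A.det 0 with hA_det | hA_det
  · rcases eq_or_ne B.det 0 with hB_det | hB_det
    · rw [hA_det, hB_det, Real.zero_rpow (by positivity), add_zero]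
      exact Real.rpow_nonneg (hA.add hB).det_nonneg _
    · rw [add_comm, add_comm A]
      exact (hB.posDef_iff_det_ne_zero.mpr hB_det).det_rpow_add_le hA
  · exact (hA.posDef_iff_det_ne_zero.mpr hA_det).det_rpow_add_le hB

end Matrix

theorem stmt0 {n : ℕ} (hn : 0 < n) (A B : Matrix (Fin n) (Fin n) ℝ)
    (hA : A.PosSemidef) (hB : B.PosSemidef) :
    A.det ^ ((1 : ℝ) / n) + B.det ^ ((1 : ℝ) / n) ≤ (A + B).det ^ ((1 : ℝ) / n) := by
  have : Nonempty (Fin n) := ⟨⟨0, hn⟩⟩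
  simpa using hA.det_rpow_add_le hB
end

section
/- Let A and B be positive semidefinite symmetric n×n real matrices. Then det A · det B ≤ (trace(A·B)/n)^n. -/
/-!
With `S = √A`, the matrix `S B S` is positive semidefinite, `det (S B S) = det A · det B` and
`tr (S B S) = tr (A B)`. For a positive semidefinite matrix, AM–GM applied to its nonnegative
eigenvalues gives `det ≤ (tr / n) ^ n`.
-/

open Matrix Finset

theorem Real.prod_le_sum_div_card_pow {ι : Type*} (s : Finset ι) (f : ι → ℝ)
    (hf : ∀ i ∈ s, 0 ≤ f i) : ∏ i ∈ s, f i ≤ ((∑ i ∈ s, f i) / #s) ^ #s := by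
  obtain rfl | hs := s.eq_empty_or_nonempty
  · simp
  have hcard : #s ≠ 0 := hs.card_ne_zero
  have amgm := Real.geom_mean_le_arith_mean s (fun _ => 1) f (fun _ _ => zero_le_one)
    (by simpa using hs) hf
  simp only [Real.rpow_one, sum_const, nsmul_eq_mul, mul_one, one_mul] at amgm
  calc ∏ i ∈ s, f i = ((∏ i ∈ s, f i) ^ ((#s : ℝ)⁻¹)) ^ #s :=
        (Real.rpow_inv_natCast_pow (prod_nonneg hf) hcard).symm
    _ ≤ ((∑ i ∈ s, f i) / #s) ^ #s :=
        pow_le_pow_left₀ (Real.rpow_nonneg (prod_nonneg hf) _) amgm _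

theorem Matrix.PosSemidef.det_le_trace_div_card_pow {ι : Type*} [Fintype ι] [DecidableEq ι]
    {A : Matrix ι ι ℝ} (hA : A.PosSemidef) :
    A.det ≤ (A.trace / Fintype.card ι) ^ Fintype.card ι := by
  have hdet : A.det = ∏ i, hA.1.eigenvalues i := by simpa using hA.1.det_eq_prod_eigenvalues
  have htrace : A.trace = ∑ i, hA.1.eigenvalues i := by simpa using hA.1.trace_eq_sum_eigenvalues
  rw [hdet, htrace]
  exact Real.prod_le_sum_div_card_pow univ _ fun i _ => hA.eigenvalues_nonneg i

open scoped MatrixOrder in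
theorem Matrix.PosSemidef.det_mul_det_le_trace_mul_div_card_pow {ι : Type*} [Fintype ι]
    [DecidableEq ι] {A B : Matrix ι ι ℝ} (hA : A.PosSemidef) (hB : B.PosSemidef) :
    A.det * B.det ≤ ((A * B).trace / Fintype.card ι) ^ Fintype.card ι := by
  set S := CFC.sqrt A
  have hS : S.PosSemidef := (CFC.sqrt_nonneg A).posSemidef
  have hSS : S * S = A := CFC.sqrt_mul_sqrt_self A hA.nonneg
  have hSBS : (S * B * S).PosSemidef := by
    simpa only [hS.1.eq] using hB.mul_mul_conjTranspose_same S
  calc A.det * B.det = (S * B * S).det := by rw [← hSS]; simp only [det_mul]; ring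
    _ ≤ ((S * B * S).trace / Fintype.card ι) ^ Fintype.card ι := hSBS.det_le_trace_div_card_pow
    _ = ((A * B).trace / Fintype.card ι) ^ Fintype.card ι := by rw [trace_mul_cycle, hSS]

theorem stmt2_general {n : ℕ} (A B : Matrix (Fin n) (Fin n) ℝ)
    (hA : A.PosSemidef) (hB : B.PosSemidef) :
    A.det * B.det ≤ ((A * B).trace / n) ^ n := by
  simpa using hA.det_mul_det_le_trace_mul_div_card_pow hB

theorem stmt2 {n : ℕ} (hn : 0 < n) (A B : Matrix (Fin n) (Fin n) ℝ)
    (hA : A.PosSemidef) (hB : B.PosSemidef) :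
    A.det * B.det ≤ ((A * B).trace / n) ^ n :=
  stmt2_general A B hA hB
end

section
/- Let Ω ⊂ ℝ^n be open and bounded, u : Ω → ℝ continuous. The set of vectors p ∈ ℝ^n that are subgradients of u at two distinct points of Ω has Lebesgue measure zero. -/
/-!
Let `u*(p) = sup_{z ∈ Ω} (p ⬝ᵥ z - u z)` be the Fenchel conjugate of `u` restricted to `Ω`. As a
supremum of affine functions whose slopes `z` range over the bounded set `Ω`, it is Lipschitz, hence
differentiable almost everywhere by Rademacher's theorem. If `p` is a subgradient of `u` at `x`,
then `q ↦ q ⬝ᵥ x - u x` is an affine minorant of `u*` touching it at `p`, so at a point of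
differentiability the gradient of `u*` is `x`. Hence `p` can be a subgradient at two distinct
points only where `u*` is not differentiable.
-/

open Matrix MeasureTheory

open scoped NNReal

section SupLipschitz

variable {α ι : Type*} [PseudoMetricSpace α] {K : ℝ≥0} {f : ι → α → ℝ} {s : Set ι}

theorem bddAbove_image_apply_of_lipschitzWith (hf : ∀ i ∈ s, LipschitzWith K (f i)) {a : α}
    (ha : BddAbove ((f · a) '' s)) (b : α) : BddAbove ((f · b) '' s) := by
  obtain ⟨M, hM⟩ := ha
  refine ⟨M + K * dist b a, ?_⟩
  rintro _ ⟨i, hi, rfl⟩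
  linarith [hM ⟨i, hi, rfl⟩, (hf i hi).le_add_mul b a]

theorem lipschitzWith_sSup_image_apply (hf : ∀ i ∈ s, LipschitzWith K (f i)) (hs : s.Nonempty)
    (hbdd : ∀ a, BddAbove ((f · a) '' s)) : LipschitzWith K fun a ↦ sSup ((f · a) '' s) := by
  refine LipschitzWith.of_le_add_mul K fun a b ↦ csSup_le (hs.image _) ?_
  rintro _ ⟨i, hi, rfl⟩
  linarith [(hf i hi).le_add_mul a b, le_csSup (hbdd b) ⟨i, hi, rfl⟩]

end SupLipschitz

section FenchelConjugate

variable {E F : Type*} [NormedAddCommGroup E] [NormedSpace ℝ E] [NormedAddCommGroup F]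
  [NormedSpace ℝ F] (B : E →L[ℝ] F →L[ℝ] ℝ) (Ω : Set F) (u : F → ℝ)

def IsSubgradientOn (x : F) (p : E) : Prop :=
  ∀ z ∈ Ω, u x + B p (z - x) ≤ u z

noncomputable def fenchelConjugateOn (p : E) : ℝ :=
  sSup ((fun z ↦ B p z - u z) '' Ω)

variable {B Ω u}

theorem lipschitzWith_apply_sub {R : ℝ≥0} {z : F} (hz : ‖z‖ ≤ R) (c : ℝ) :
    LipschitzWith (‖B‖₊ * R) fun p ↦ B p z - c := by
  refine LipschitzWith.of_le_add_mul _ fun p q ↦ ?_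
  have : B (p - q) z ≤ ‖B‖ * R * dist p q := calc
    B (p - q) z ≤ ‖B‖ * ‖p - q‖ * ‖z‖ := (le_abs_self _).trans (B.le_opNorm₂ _ _)
    _ ≤ ‖B‖ * R * dist p q := by rw [dist_eq_norm, mul_right_comm]; gcongr
  simp only [map_sub, _root_.sub_apply] at this
  push_cast
  linarith

theorem le_fenchelConjugateOn {x : F} (hx : x ∈ Ω) {q : E}
    (hq : BddAbove ((fun z ↦ B q z - u z) '' Ω)) : B q x - u x ≤ fenchelConjugateOn B Ω u q :=
  le_csSup hq ⟨x, hx, rfl⟩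

theorem IsSubgradientOn.isGreatest {x : F} {p : E} (h : IsSubgradientOn B Ω u x p) (hx : x ∈ Ω) :
    IsGreatest ((fun z ↦ B p z - u z) '' Ω) (B p x - u x) := by
  refine ⟨⟨x, hx, rfl⟩, ?_⟩
  rintro _ ⟨z, hz, rfl⟩
  have := h z hz
  simp only [map_sub] at this
  linarith

theorem IsSubgradientOn.fenchelConjugateOn_eq {x : F} {p : E} (h : IsSubgradientOn B Ω u x p)
    (hx : x ∈ Ω) : fenchelConjugateOn B Ω u p = B p x - u x :=
  (h.isGreatest hx).csSup_eq

theorem IsSubgradientOn.bddAbove_image {R : ℝ≥0} (hR : ∀ z ∈ Ω, ‖z‖ ≤ R) {x : F} {p : E}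
    (h : IsSubgradientOn B Ω u x p) (hx : x ∈ Ω) (q : E) :
    BddAbove ((fun z ↦ B q z - u z) '' Ω) :=
  bddAbove_image_apply_of_lipschitzWith (fun z hz ↦ lipschitzWith_apply_sub (hR z hz) (u z))
    (h.isGreatest hx).bddAbove q

theorem lipschitzWith_fenchelConjugateOn {R : ℝ≥0} (hR : ∀ z ∈ Ω, ‖z‖ ≤ R) (hΩ : Ω.Nonempty)
    (hbdd : ∀ q, BddAbove ((fun z ↦ B q z - u z) '' Ω)) :
    LipschitzWith (‖B‖₊ * R) (fenchelConjugateOn B Ω u) :=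
  lipschitzWith_sSup_image_apply (fun z hz ↦ lipschitzWith_apply_sub (hR z hz) (u z)) hΩ hbdd

theorem IsSubgradientOn.fderiv_fenchelConjugateOn {x : F} {p : E} (h : IsSubgradientOn B Ω u x p)
    (hx : x ∈ Ω) (hbdd : ∀ q, BddAbove ((fun z ↦ B q z - u z) '' Ω))
    (hd : DifferentiableAt ℝ (fenchelConjugateOn B Ω u) p) :
    fderiv ℝ (fenchelConjugateOn B Ω u) p = B.flip x := by
  have hmin : IsLocalMin (fun q ↦ fenchelConjugateOn B Ω u q - B.flip x q) p :=
    Filter.Eventually.of_forall fun q ↦ by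
      have := le_fenchelConjugateOn hx (hbdd q)
      simp only [ContinuousLinearMap.flip_apply, h.fenchelConjugateOn_eq hx] at this ⊢
      linarith
  exact sub_eq_zero.mp (hmin.hasFDerivAt_eq_zero (hd.hasFDerivAt.sub (B.flip x).hasFDerivAt))

theorem measure_setOf_isSubgradientOn_of_ne [FiniteDimensional ℝ E] [MeasurableSpace E]
    [BorelSpace E] (μ : Measure E) [μ.IsAddHaarMeasure] (hΩ : Bornology.IsBounded Ω)
    (hB : Function.Injective B.flip) :
    μ {p | ∃ x ∈ Ω, ∃ y ∈ Ω, x ≠ y ∧ IsSubgradientOn B Ω u x p ∧ IsSubgradientOn B Ω u y p} = 0 := by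
  set S := {p | ∃ x ∈ Ω, ∃ y ∈ Ω, x ≠ y ∧ IsSubgradientOn B Ω u x p ∧ IsSubgradientOn B Ω u y p}
  obtain hS | ⟨p₀, x₀, hx₀, -, -, -, hp₀, -⟩ := S.eq_empty_or_nonempty
  · rw [hS, measure_empty]
  obtain ⟨R, hR₀, hR⟩ := hΩ.exists_pos_norm_le
  lift R to ℝ≥0 using hR₀.le
  have hbdd := hp₀.bddAbove_image hR hx₀
  have hdiff := (lipschitzWith_fenchelConjugateOn hR ⟨x₀, hx₀⟩ hbdd).ae_differentiableAt (μ := μ)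
  refine measure_mono_null ?_ (ae_iff.mp hdiff)
  rintro p ⟨x, hx, y, hy, hxy, hpx, hpy⟩ hd
  exact hxy <| hB <| (hpx.fderiv_fenchelConjugateOn hx hbdd hd).symm.trans
    (hpy.fderiv_fenchelConjugateOn hy hbdd hd)

end FenchelConjugate

theorem injective_flip_toContinuousBilinearMap_dotProductBilin (ι : Type*) [Fintype ι] :
    Function.Injective (dotProductBilin ℝ ℝ : (ι → ℝ) →ₗ[ℝ] _).toContinuousBilinearMap.flip :=
  fun x y h ↦ dotProduct_eq x y fun v ↦ by
    simpa [dotProduct_comm] using DFunLike.congr_fun h v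

theorem stmt9_general {n : ℕ} (Ω : Set (Fin n → ℝ)) (hΩb : Bornology.IsBounded Ω)
    (u : (Fin n → ℝ) → ℝ) :
    volume {p : Fin n → ℝ | ∃ x ∈ Ω, ∃ y ∈ Ω, x ≠ y ∧
      (∀ z ∈ Ω, u x + p ⬝ᵥ (z - x) ≤ u z) ∧ (∀ z ∈ Ω, u y + p ⬝ᵥ (z - y) ≤ u z)} = 0 :=
  -- for `B` the dot product, `IsSubgradientOn B Ω u x p` unfolds to the conditions above
  measure_setOf_isSubgradientOn_of_ne volume hΩb (u := u)
    (injective_flip_toContinuousBilinearMap_dotProductBilin (Fin n))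

theorem stmt9 {n : ℕ} (Ω : Set (Fin n → ℝ)) (hΩo : IsOpen Ω) (hΩb : Bornology.IsBounded Ω)
    (u : (Fin n → ℝ) → ℝ) (hu : ContinuousOn u Ω) :
    volume {p : Fin n → ℝ | ∃ x ∈ Ω, ∃ y ∈ Ω, x ≠ y ∧
      (∀ z ∈ Ω, u x + p ⬝ᵥ (z - x) ≤ u z) ∧ (∀ z ∈ Ω, u y + p ⬝ᵥ (z - y) ≤ u z)} = 0 :=
  stmt9_general Ω hΩb u
end

section
/- (Pointwise maximum principle for normal mapping) Let Ω ⊂ ℝ^n be a bounded open set and u, v continuous on the closure of Ω. If u ≥ v on ∂Ω and v(x₀) ≥ u(x₀) for some x₀ ∈ Ω, then every subgradient p of v at x₀ is a subgradient of u at some point of Ω, i.e., ∂v(x₀) ⊂ ∂u(Ω). -/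
/-!
Subtracting the linear part of the supporting hyperplane of `v` at `x₀`, minimize
`w x = u x - p ⬝ᵥ x` over the compact set `closure Ω`. On `∂Ω` we have
`w ≥ v - p ⬝ᵥ · ≥ v x₀ - p ⬝ᵥ x₀ ≥ w x₀`, so either a minimizer lies in the interior of `Ω`,
or `x₀` itself is a minimizer. At a minimizer `z` of `w`, `p` is a subgradient of `u`.
-/

open Matrix

theorem IsCompact.exists_isMinOn_mem_of_le_on_frontier {X α : Type*} [TopologicalSpace X]
    [LinearOrder α] [TopologicalSpace α] [ClosedIicTopology α] {Ω : Set X} {w : X → α}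
    (hΩ : IsCompact (closure Ω)) (hw : ContinuousOn w (closure Ω)) {x₀ : X} (hx₀ : x₀ ∈ Ω)
    (hfrontier : ∀ x ∈ frontier Ω, w x₀ ≤ w x) : ∃ z ∈ Ω, IsMinOn w (closure Ω) z := by
  obtain ⟨z, hz, hzmin⟩ := hΩ.exists_isMinOn ⟨x₀, subset_closure hx₀⟩ hw
  by_cases hzΩ : z ∈ frontier Ω
  · exact ⟨x₀, hx₀, fun x hx => (hfrontier z hzΩ).trans (hzmin hx)⟩
  · exact ⟨z, interior_subset (closure_sdiff_frontier Ω ▸ ⟨hz, hzΩ⟩), hzmin⟩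

theorem add_dotProduct_sub_le_of_isMinOn {ι R : Type*} [Fintype ι] [CommRing R]
    [PartialOrder R] [IsOrderedAddMonoid R] {u : (ι → R) → R} {p z : ι → R} {s : Set (ι → R)}
    (hz : IsMinOn (fun x => u x - p ⬝ᵥ x) s z) {x : ι → R} (hx : x ∈ s) :
    u z + p ⬝ᵥ (x - z) ≤ u x :=
  calc u z + p ⬝ᵥ (x - z) = (u z - p ⬝ᵥ z) + p ⬝ᵥ x := by rw [dotProduct_sub]; abel
    _ ≤ (u x - p ⬝ᵥ x) + p ⬝ᵥ x := add_le_add_left (hz hx) _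
    _ = u x := sub_add_cancel _ _

theorem stmt11_general {n : ℕ} (Ω : Set (Fin n → ℝ)) (hΩb : Bornology.IsBounded Ω)
    (u v : (Fin n → ℝ) → ℝ) (hu : ContinuousOn u (closure Ω))
    (hbd : ∀ x ∈ frontier Ω, v x ≤ u x) (x₀ : Fin n → ℝ) (hx₀ : x₀ ∈ Ω)
    (hval : u x₀ ≤ v x₀) :
    ∀ p : Fin n → ℝ, (∀ x ∈ closure Ω, v x₀ + p ⬝ᵥ (x - x₀) ≤ v x) →
      ∃ z ∈ Ω, ∀ x ∈ closure Ω, u z + p ⬝ᵥ (x - z) ≤ u x := by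
  intro p hp
  have hw : ContinuousOn (fun x => u x - p ⬝ᵥ x) (closure Ω) :=
    hu.sub (continuous_const.dotProduct continuous_id).continuousOn
  have hfrontier : ∀ x ∈ frontier Ω, u x₀ - p ⬝ᵥ x₀ ≤ u x - p ⬝ᵥ x := by
    intro x hx
    have hsupport := hp x (frontier_subset_closure hx)
    rw [dotProduct_sub] at hsupport
    linarith [hbd x hx]
  obtain ⟨z, hzΩ, hzmin⟩ :=
    hΩb.isCompact_closure.exists_isMinOn_mem_of_le_on_frontier hw hx₀ hfrontier
  exact ⟨z, hzΩ, fun x hx => add_dotProduct_sub_le_of_isMinOn hzmin hx⟩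

theorem stmt11 {n : ℕ} (Ω : Set (Fin n → ℝ)) (hΩo : IsOpen Ω) (hΩb : Bornology.IsBounded Ω)
    (u v : (Fin n → ℝ) → ℝ) (hu : ContinuousOn u (closure Ω)) (hv : ContinuousOn v (closure Ω))
    (hbd : ∀ x ∈ frontier Ω, v x ≤ u x) (x₀ : Fin n → ℝ) (hx₀ : x₀ ∈ Ω)
    (hval : u x₀ ≤ v x₀) :
    ∀ p : Fin n → ℝ, (∀ x ∈ closure Ω, v x₀ + p ⬝ᵥ (x - x₀) ≤ v x) →
      ∃ z ∈ Ω, ∀ x ∈ closure Ω, u z + p ⬝ᵥ (x - z) ≤ u x :=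
  stmt11_general Ω hΩb u v hu hbd x₀ hx₀ hval
end

section
/- (Maximum principle for normal mapping) Let Ω ⊂ ℝ^n be a bounded open set and u, v continuous on the closure of Ω with u = v on ∂Ω and v ≥ u in Ω. Then ∂v(Ω) ⊂ ∂u(Ω). -/
/-!
If `p` supports `v` at `x₀`, then `x ↦ v x - p ⬝ᵥ x` is minimal at `x₀`. The function
`x ↦ u x - p ⬝ᵥ x` attains its minimum on the compact set `closure Ω`, and on `∂Ω`, where `u = v`,
it is at least its value at `x₀` since `u x₀ ≤ v x₀`. Hence a minimiser can be taken in `Ω`,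
and `p` supports `u` at it.
-/

open Matrix

theorem IsCompact.exists_isMinOn_mem_of_le_frontier {X β : Type*} [TopologicalSpace X]
    [LinearOrder β] [TopologicalSpace β] [ClosedIicTopology β] {s : Set X} {f : X → β}
    (hs : IsCompact (closure s)) (hf : ContinuousOn f (closure s)) {x₀ : X} (hx₀ : x₀ ∈ s)
    (hfront : ∀ y ∈ frontier s, f x₀ ≤ f y) : ∃ z ∈ s, IsMinOn f (closure s) z := by
  obtain ⟨z, hz, hzmin⟩ := hs.exists_isMinOn ⟨x₀, subset_closure hx₀⟩ hf
  by_cases hzs : z ∈ s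
  · exact ⟨z, hzs, hzmin⟩
  · have hz_front : z ∈ frontier s := ⟨hz, fun hzi => hzs (interior_subset hzi)⟩
    exact ⟨x₀, hx₀, fun y hy => (hfront z hz_front).trans (hzmin hy)⟩

theorem isMinOn_sub_dotProduct_iff {ι : Type*} [Fintype ι] {u : (ι → ℝ) → ℝ} {p z : ι → ℝ}
    {s : Set (ι → ℝ)} :
    IsMinOn (fun x => u x - p ⬝ᵥ x) s z ↔ ∀ x ∈ s, u z + p ⬝ᵥ (x - z) ≤ u x := by
  refine forall₂_congr fun x _ => ?_
  simp only [Set.mem_ofPred_eq, dotProduct_sub]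
  constructor <;> intro h <;> linarith

theorem stmt12_general {n : ℕ} (Ω : Set (Fin n → ℝ)) (hΩb : Bornology.IsBounded Ω)
    (u v : (Fin n → ℝ) → ℝ) (hu : ContinuousOn u (closure Ω))
    (hbd : ∀ x ∈ frontier Ω, u x = v x) (hge : ∀ x ∈ Ω, u x ≤ v x) :
    ∀ x₀ ∈ Ω, ∀ p : Fin n → ℝ, (∀ x ∈ closure Ω, v x₀ + p ⬝ᵥ (x - x₀) ≤ v x) →
      ∃ z ∈ Ω, ∀ x ∈ closure Ω, u z + p ⬝ᵥ (x - z) ≤ u x := by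
  intro x₀ hx₀ p hp
  have hv_min : IsMinOn (fun x => v x - p ⬝ᵥ x) (closure Ω) x₀ :=
    isMinOn_sub_dotProduct_iff.mpr hp
  have hcompact : IsCompact (closure Ω) := hΩb.isCompact_closure
  have hcont : ContinuousOn (fun x => u x - p ⬝ᵥ x) (closure Ω) := by
    refine hu.sub (Continuous.continuousOn ?_)
    fun_prop
  obtain ⟨z, hz, hzmin⟩ := hcompact.exists_isMinOn_mem_of_le_frontier hcont hx₀ fun y hy =>
    calc u x₀ - p ⬝ᵥ x₀ ≤ v x₀ - p ⬝ᵥ x₀ := by linarith [hge x₀ hx₀]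
      _ ≤ v y - p ⬝ᵥ y := hv_min (frontier_subset_closure hy)
      _ = u y - p ⬝ᵥ y := by rw [hbd y hy]
  exact ⟨z, hz, isMinOn_sub_dotProduct_iff.mp hzmin⟩

theorem stmt12 {n : ℕ} (Ω : Set (Fin n → ℝ)) (hΩo : IsOpen Ω) (hΩb : Bornology.IsBounded Ω)
    (u v : (Fin n → ℝ) → ℝ) (hu : ContinuousOn u (closure Ω)) (hv : ContinuousOn v (closure Ω))
    (hbd : ∀ x ∈ frontier Ω, u x = v x) (hge : ∀ x ∈ Ω, u x ≤ v x) :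
    ∀ x₀ ∈ Ω, ∀ p : Fin n → ℝ, (∀ x ∈ closure Ω, v x₀ + p ⬝ᵥ (x - x₀) ≤ v x) →
      ∃ z ∈ Ω, ∀ x ∈ closure Ω, u z + p ⬝ᵥ (x - z) ≤ u x :=
  stmt12_general Ω hΩb u v hu hbd hge
end
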